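/- Let Z be a random variable and N_t a positive-integer-valued random variable with 1 ≤ N ≤ ζ^D almost surely for some real ζ > 1 and integer D ≥ 1. Suppose for each l ∈ {1,...,D}, with λ_l = (2/σ)·sqrt(κϑ/ζ^{l-1/2}) and κ = 1/(σ²(ζ^{1/4}+ζ^{-1/4})²), we have P(λ_l·Z - (λ_l²σ²/2)·N ≥ 2κϑ) ≤ exp(-2κϑ). Then P(Z/√N ≥ √ϑ) ≤ D·exp(-2κϑ). -/

import Mathlib

open MeasureTheory ProbabilityTheory
open scoped ENNReal

lemma exists_level (ζ : ℝ) (hζ : 1 < ζ) (D : ℕ) (hD : 1 ≤ D) (n : ℕ)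
    (hn1 : 1 ≤ n) (hnD : (n : ℝ) ≤ ζ ^ D) :
    ∃ l ∈ Finset.Icc 1 D, ζ ^ (l - 1) ≤ (n : ℝ) ∧ (n : ℝ) ≤ ζ ^ l := by
  classical
  have hP : ∃ l, (n : ℝ) ≤ ζ ^ l := ⟨D, hnD⟩
  set m := Nat.find hP with hm
  have hspec : (n : ℝ) ≤ ζ ^ m := Nat.find_spec hP
  have hmD : m ≤ D := Nat.find_min' hP hnD
  rcases Nat.eq_zero_or_pos m with h0 | h1
  · refine ⟨1, Finset.mem_Icc.mpr ⟨le_refl 1, hD⟩, ?_, ?_⟩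
    · simpa using (by exact_mod_cast hn1 : (1:ℝ) ≤ (n:ℝ))
    · have : (n : ℝ) ≤ 1 := by simpa [h0] using hspec
      calc (n : ℝ) ≤ 1 := this
        _ ≤ ζ ^ 1 := by simpa using hζ.le
  · refine ⟨m, Finset.mem_Icc.mpr ⟨h1, hmD⟩, ?_, hspec⟩
    have hmin := Nat.find_min hP (m := m - 1) (by omega)
    push_neg at hmin
    exact hmin.le

set_option maxHeartbeats 800000 in
lemma core_ineq (σ ϑ a κ c n z lam : ℝ)
    (hσ : 0 < σ) (hϑ : 0 < ϑ) (ha : 1 < a)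
    (hκ : κ = 1 / (σ ^ 2 * (a + a⁻¹) ^ 2))
    (hc : 0 < c) (hn : 0 < n)
    (hlow : c / a ^ 2 ≤ n) (hhigh : n ≤ c * a ^ 2)
    (hz : Real.sqrt ϑ ≤ z / Real.sqrt n)
    (hlam : lam = (2 / σ) * Real.sqrt (κ * ϑ / c)) :
    lam * z - lam ^ 2 * σ ^ 2 / 2 * n ≥ 2 * κ * ϑ := by
  have ha0 : 0 < a := lt_trans one_pos ha
  have hai : 0 < a⁻¹ := by positivity
  set s : ℝ := 1 / (σ * (a + a⁻¹)) with hs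
  have hs0 : 0 < s := by positivity
  have hκs : κ = s ^ 2 := by
    rw [hκ, hs]
    field_simp
  have hκ0 : 0 < κ := by rw [hκs]; positivity
  set x := Real.sqrt (n / c) with hx
  have hx0 : 0 < x := Real.sqrt_pos.mpr (by positivity)
  have hx2 : x ^ 2 = n / c := Real.sq_sqrt (by positivity)
  have hxle : x ≤ a := by
    have h1 : n / c ≤ a ^ 2 := (div_le_iff₀ hc).mpr (by linarith)
    calc x ≤ Real.sqrt (a ^ 2) := Real.sqrt_le_sqrt h1
      _ = a := Real.sqrt_sq ha0.le
  have hxge : a⁻¹ ≤ x := by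
    have h1 : a⁻¹ ^ 2 ≤ n / c := by
      rw [le_div_iff₀ hc]
      have : a⁻¹ ^ 2 * c = c / a ^ 2 := by field_simp
      rw [this]; exact hlow
    calc a⁻¹ = Real.sqrt (a⁻¹ ^ 2) := (Real.sqrt_sq hai.le).symm
      _ ≤ x := Real.sqrt_le_sqrt h1
  have hsqrtκ : Real.sqrt κ = s := by rw [hκs]; exact Real.sqrt_sq hs0.le
  have hsqc : 0 < Real.sqrt c := Real.sqrt_pos.mpr hc
  have hsqn : 0 < Real.sqrt n := Real.sqrt_pos.mpr hn
  have h1 : Real.sqrt (κ * ϑ / c) = s * Real.sqrt ϑ / Real.sqrt c := by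
    rw [Real.sqrt_div (by positivity) c, Real.sqrt_mul hκ0.le, hsqrtκ]
  have hsn : Real.sqrt n = Real.sqrt c * x := by
    rw [hx, ← Real.sqrt_mul hc.le]
    congr 1
    field_simp
  have hz' : Real.sqrt ϑ * Real.sqrt n ≤ z := by
    have := mul_le_mul_of_nonneg_right hz hsqn.le
    rwa [div_mul_cancel₀ _ hsqn.ne'] at this
  have hϑs : Real.sqrt ϑ ^ 2 = ϑ := Real.sq_sqrt hϑ.le
  have hlam0 : 0 ≤ lam := by rw [hlam]; positivity
  have hlam2 : lam ^ 2 * σ ^ 2 / 2 = 2 * κ * ϑ / c := by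
    have hsq : Real.sqrt (κ * ϑ / c) ^ 2 = κ * ϑ / c := Real.sq_sqrt (by positivity)
    rw [hlam, mul_pow, hsq]
    field_simp
  have hlamz : 2 * s * ϑ / σ * x ≤ lam * z := by
    have hle : lam * (Real.sqrt ϑ * Real.sqrt n) ≤ lam * z :=
      mul_le_mul_of_nonneg_left hz' hlam0
    have heq : lam * (Real.sqrt ϑ * Real.sqrt n) = 2 * s * ϑ / σ * x := by
      rw [hlam, h1, hsn]
      have : Real.sqrt ϑ * Real.sqrt ϑ = ϑ := Real.mul_self_sqrt hϑ.le
      field_simp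
      linear_combination this
    rw [heq] at hle
    exact hle
  have hain : a * a⁻¹ = 1 := mul_inv_cancel₀ ha0.ne'
  have key : x ^ 2 + 1 ≤ x * (a + a⁻¹) := by
    nlinarith [mul_nonneg (sub_nonneg.mpr hxle) (sub_nonneg.mpr hxge)]
  have hσs : σ * s * (a + a⁻¹) = 1 := by
    rw [hs]
    field_simp
  have hne : n = c * x ^ 2 := by rw [hx2]; field_simp
  rw [hlam2, hne]
  have hfrac : 2 * κ * ϑ / c * (c * x ^ 2) = 2 * κ * ϑ * x ^ 2 := by
    field_simp
  rw [hfrac]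
  -- reduce to: 2*s*ϑ/σ * x - 2*s^2*ϑ*x^2 ≥ 2*s^2*ϑ
  have hkey2 : σ * s * (x ^ 2 + 1) ≤ x := by
    calc σ * s * (x ^ 2 + 1) ≤ σ * s * (x * (a + a⁻¹)) := by
          apply mul_le_mul_of_nonneg_left key (by positivity)
      _ = x * (σ * s * (a + a⁻¹)) := by ring
      _ = x := by rw [hσs]; ring
  have : 2 * s ^ 2 * ϑ * (x ^ 2 + 1) ≤ 2 * s * ϑ / σ * x := by
    have h2 : 2 * s * ϑ / σ * (σ * s * (x ^ 2 + 1)) ≤ 2 * s * ϑ / σ * x :=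
      mul_le_mul_of_nonneg_left hkey2 (by positivity)
    calc 2 * s ^ 2 * ϑ * (x ^ 2 + 1) = 2 * s * ϑ / σ * (σ * s * (x ^ 2 + 1)) := by
          field_simp
      _ ≤ 2 * s * ϑ / σ * x := h2
  rw [hκs]
  nlinarith [hlamz, this]

theorem stmt_4 {Ω : Type*} [MeasureSpace Ω] [IsProbabilityMeasure (ℙ : Measure Ω)]
    (σ ϑ ζ : ℝ) (hσ : 0 < σ) (hϑ : 0 < ϑ) (hζ : 1 < ζ)
    (κ : ℝ) (hκ : κ = 1 / (σ ^ 2 * (ζ ^ ((1:ℝ)/4) + ζ ^ (-((1:ℝ)/4))) ^ 2))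
    (D : ℕ) (hD : 1 ≤ D)
    (Z : Ω → ℝ) (N : Ω → ℕ)
    (hN : ∀ ω, 1 ≤ N ω ∧ (N ω : ℝ) ≤ ζ ^ (D : ℝ))
    (lam : ℕ → ℝ)
    (hlam : ∀ l, lam l = (2 / σ) * Real.sqrt (κ * ϑ / ζ ^ ((l : ℝ) - 1/2)))
    (htail : ∀ l ∈ Finset.Icc 1 D,
      ℙ {ω | lam l * Z ω - lam l ^ 2 * σ ^ 2 / 2 * (N ω : ℝ) ≥ 2 * κ * ϑ} ≤
        ENNReal.ofReal (Real.exp (-(2 * κ * ϑ)))) :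
    ℙ {ω | Z ω / Real.sqrt (N ω) ≥ Real.sqrt ϑ} ≤
      (D : ℝ≥0∞) * ENNReal.ofReal (Real.exp (-(2 * κ * ϑ))) := by
  classical
  have hζ0 : (0:ℝ) < ζ := lt_trans one_pos hζ
  set a : ℝ := ζ ^ ((1:ℝ)/4) with hadef
  have ha1 : 1 < a := Real.one_lt_rpow_iff_of_pos hζ0 |>.mpr (Or.inl ⟨hζ, by norm_num⟩)
  have ha0 : (0:ℝ) < a := lt_trans one_pos ha1
  have ha2 : a ^ 2 = ζ ^ ((1:ℝ)/2) := by
    rw [hadef, ← Real.rpow_natCast (ζ ^ ((1:ℝ)/4)) 2, ← Real.rpow_mul hζ0.le]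
    norm_num
  have hκ' : κ = 1 / (σ ^ 2 * (a + a⁻¹) ^ 2) := by
    rw [hκ, hadef, Real.rpow_neg hζ0.le]
  have hsub : {ω | Z ω / Real.sqrt (N ω) ≥ Real.sqrt ϑ} ⊆
      ⋃ l ∈ Finset.Icc 1 D,
        {ω | lam l * Z ω - lam l ^ 2 * σ ^ 2 / 2 * (N ω : ℝ) ≥ 2 * κ * ϑ} := by
    intro ω hω
    simp only [Set.mem_setOf_eq] at hω
    obtain ⟨hN1, hND⟩ := hN ω
    have hNDpow : ((N ω : ℝ)) ≤ ζ ^ D := by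
      rwa [← Real.rpow_natCast ζ D]
    obtain ⟨l, hlmem, hlow, hhigh⟩ := exists_level ζ hζ D hD (N ω) hN1 hNDpow
    obtain ⟨hl1, hlD⟩ := Finset.mem_Icc.mp hlmem
    simp only [Set.mem_iUnion]
    refine ⟨l, hlmem, ?_⟩
    simp only [Set.mem_setOf_eq]
    set c : ℝ := ζ ^ ((l : ℝ) - 1/2) with hcdef
    have hc0 : 0 < c := Real.rpow_pos_of_pos hζ0 _
    have hn0 : (0:ℝ) < (N ω : ℝ) := by exact_mod_cast hN1
    have hca : c / a ^ 2 ≤ (N ω : ℝ) := by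
      have : c / a ^ 2 = ζ ^ ((l : ℝ) - 1) := by
        rw [ha2, hcdef, ← Real.rpow_sub hζ0]
        congr 1
        ring
      rw [this]
      have hcast : ((l - 1 : ℕ) : ℝ) = (l : ℝ) - 1 := by
        push_cast [hl1]
        ring
      calc ζ ^ ((l : ℝ) - 1) = ζ ^ (l - 1 : ℕ) := by
            rw [← hcast, Real.rpow_natCast]
        _ ≤ (N ω : ℝ) := hlow
    have hac : (N ω : ℝ) ≤ c * a ^ 2 := by
      have : c * a ^ 2 = ζ ^ ((l : ℝ)) := by
        rw [ha2, hcdef, ← Real.rpow_add hζ0]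
        congr 1
        ring
      rw [this, Real.rpow_natCast]
      exact hhigh
    exact core_ineq σ ϑ a κ c (N ω) (Z ω) (lam l) hσ hϑ ha1 hκ' hc0 hn0 hca hac hω (hlam l)
  calc ℙ {ω | Z ω / Real.sqrt (N ω) ≥ Real.sqrt ϑ}
      ≤ ℙ (⋃ l ∈ Finset.Icc 1 D,
        {ω | lam l * Z ω - lam l ^ 2 * σ ^ 2 / 2 * (N ω : ℝ) ≥ 2 * κ * ϑ}) :=
        measure_mono hsub
    _ ≤ ∑ l ∈ Finset.Icc 1 D,
        ℙ {ω | lam l * Z ω - lam l ^ 2 * σ ^ 2 / 2 * (N ω : ℝ) ≥ 2 * κ * ϑ} :=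
        measure_biUnion_finset_le _ _
    _ ≤ ∑ _l ∈ Finset.Icc 1 D, ENNReal.ofReal (Real.exp (-(2 * κ * ϑ))) :=
        Finset.sum_le_sum htail
    _ = (D : ℝ≥0∞) * ENNReal.ofReal (Real.exp (-(2 * κ * ϑ))) := by
        rw [Finset.sum_const, Nat.card_Icc]
        simp [nsmul_eq_mul]
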